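/- Let G be a group, x ∈ G, and let z(i,j) ∈ G for i, j ≥ 1 be a family of elements such that any two elements z(i,j) and z(k,l) commute, and such that [z(i,j), x] = z(i+1,j) · z(i,j+1) · z(i+1,j+1) for all i, j ≥ 1. Then for all i, j ≥ 1 and all r ≥ 0, the left-normed iterated commutator [z(i,j), x, x, …, x] (with r copies of x) equals the product ∏_{s=0}^{r} ∏_{t=0}^{s} z(i + r − t, j + r − s + t)^{\binom{r}{s}\binom{s}{t}} (the order of the factors is immaterial since they all commute). -/

import Mathlib

/-!
The elements `z i j` generate an abelian subgroup `H`, which `[·, x]` maps into itself; on `H`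
the map `h ↦ [h, x]` is therefore an endomorphism `ψ`, and the iterated commutator is
`ψ^[r] (z i j)`. Record a product `∏ z a b ^ n a b` by the polynomial `∑ n a b • X ^ a * Y ^ b`.
The hypothesis says that `ψ` acts on such records as multiplication by `X + Y + XY`, so
`ψ^[r] (z i j)` is recorded by `X ^ i * Y ^ j * (XY + (X + Y)) ^ r`, and the formula is the
binomial expansion of this polynomial, applied twice.
-/

/-- The commutator `[u,v] = u⁻¹ v⁻¹ u v`. -/
def cmt {G : Type*} [Group G] (u v : G) : G := u⁻¹ * v⁻¹ * u * v

/-- The left-normed iterated commutator `[g, x, x, …, x]` with `r` copies of `x`. -/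
def iteratedCmt {G : Type*} [Group G] (g x : G) : ℕ → G
  | 0 => g
  | (r + 1) => cmt (iteratedCmt g x r) x

open AddMonoidAlgebra Finset
open scoped IsMulCommutative

section Group

variable {G : Type*} [Group G]

theorem iteratedCmt_eq_iterate (g x : G) (r : ℕ) :
    iteratedCmt g x r = (fun h => cmt h x)^[r] g := by
  induction r with
  | zero => rfl
  | succ r ih => rw [Function.iterate_succ_apply', ← ih]; rfl

theorem cmt_mul_of_commute {a b : G} (x : G) (h : Commute (cmt a x) b) :
    cmt (a * b) x = cmt a x * cmt b x := by
  have h' : cmt a x * b⁻¹ = b⁻¹ * cmt a x := h.inv_right.eq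
  calc cmt (a * b) x = b⁻¹ * cmt a x * (x⁻¹ * b * x) := by simp only [cmt]; group
    _ = cmt a x * cmt b x := by rw [← h']; simp only [cmt]; group

theorem cmt_mem_closure {S : Set G} {x : G} (hS : ∀ s ∈ S, cmt s x ∈ Subgroup.closure S)
    {h : G} (hh : h ∈ Subgroup.closure S) : cmt h x ∈ Subgroup.closure S := by
  have hconj : Subgroup.closure S ≤ (Subgroup.closure S).comap (MulAut.conj x⁻¹).toMonoidHom := by
    refine (Subgroup.closure_le _).2 fun s hs => ?_
    have : x⁻¹ * s * x = s * cmt s x := by simp only [cmt]; group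
    simpa [this] using mul_mem (Subgroup.subset_closure hs) (hS s hs)
  have : cmt h x = h⁻¹ * (x⁻¹ * h * x) := by simp only [cmt]; group
  simpa [this] using mul_mem (inv_mem hh) (hconj hh)

def Subgroup.cmtHom (H : Subgroup G) [IsMulCommutative H] (x : G)
    (hx : ∀ h ∈ H, cmt h x ∈ H) : H →* H where
  toFun h := ⟨cmt h x, hx h h.2⟩
  map_one' := Subtype.ext (by simp [cmt])
  map_mul' a b := Subtype.ext <| cmt_mul_of_commute x <|
    Subtype.ext_iff.mp (mul_comm (⟨cmt a x, hx a a.2⟩ : H) b)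

end Group

section Expansion

/-- `X + Y + XY`, where the monomial `X ^ a * Y ^ b` is `single (a, b) 1`. -/
noncomputable def stepPoly : AddMonoidAlgebra ℕ (ℕ × ℕ) :=
  single (1, 0) 1 + single (0, 1) 1 + single (1, 1) 1

theorem single_mul_stepPoly (i j : ℕ) :
    single (i, j) 1 * stepPoly =
      single (i + 1, j) 1 + single (i, j + 1) 1 + single (i + 1, j + 1) 1 := by
  simp only [stepPoly, mul_add, single_mul_single, Prod.mk_add_mk, add_zero, mul_one]

theorem single_mul_stepPoly_pow (i j r : ℕ) :
    single (i, j) 1 * stepPoly ^ r = ∑ s ∈ range (r + 1), ∑ t ∈ range (s + 1),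
      single (i + r - t, j + r - s + t) (r.choose s * s.choose t) := by
  -- `(X + Y + XY) ^ r = ∑ C(r,s) (Y + X) ^ s (XY) ^ (r - s)`, then expand `(Y + X) ^ s`
  rw [stepPoly, add_comm (single (1, 0) 1), add_pow, mul_sum]
  refine sum_congr rfl fun s hs => ?_
  rw [add_pow, sum_mul, sum_mul, mul_sum]
  refine sum_congr rfl fun t ht => ?_
  have hsr := Nat.lt_succ_iff.mp (mem_range.mp hs)
  have hts := Nat.lt_succ_iff.mp (mem_range.mp ht)
  simp only [single_pow, natCast_def, single_mul_single, one_pow, mul_one, one_mul, Prod.smul_mk,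
    smul_eq_mul, Prod.mk_add_mk, Nat.cast_id]
  congr 1
  · ext <;> simp only [mul_zero, zero_add, add_zero, Prod.mk_add_mk] <;> omega
  · exact mul_comm _ _

variable {M : Type*} [CommMonoid M]

def prodPowCoeff (w : ℕ → ℕ → M) (f : AddMonoidAlgebra ℕ (ℕ × ℕ)) : M :=
  f.coeff.prod fun p n => w p.1 p.2 ^ n

theorem prodPowCoeff_add (w : ℕ → ℕ → M) (f g : AddMonoidAlgebra ℕ (ℕ × ℕ)) :
    prodPowCoeff w (f + g) = prodPowCoeff w f * prodPowCoeff w g :=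
  Finsupp.prod_add_index' (fun _ => pow_zero _) fun _ => pow_add _

theorem prodPowCoeff_sum {ι : Type*} (w : ℕ → ℕ → M) (s : Finset ι)
    (f : ι → AddMonoidAlgebra ℕ (ℕ × ℕ)) :
    prodPowCoeff w (∑ k ∈ s, f k) = ∏ k ∈ s, prodPowCoeff w (f k) := by
  rw [prodPowCoeff, coeff_sum]
  exact (Finsupp.prod_finsetSum_index (fun _ => pow_zero _) fun _ => pow_add _).symm

theorem prodPowCoeff_single (w : ℕ → ℕ → M) (a b n : ℕ) :
    prodPowCoeff w (single (a, b) n) = w a b ^ n :=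
  Finsupp.prod_single_index (pow_zero _)

theorem prodPowCoeff_single_mul_stepPoly_pow (w : ℕ → ℕ → M) (i j r : ℕ) :
    prodPowCoeff w (single (i, j) 1 * stepPoly ^ r) =
      ∏ s ∈ range (r + 1), ∏ t ∈ range (s + 1),
        w (i + r - t) (j + r - s + t) ^ (r.choose s * s.choose t) := by
  simp only [single_mul_stepPoly_pow, prodPowCoeff_sum, prodPowCoeff_single]

theorem prodPowCoeff_single_mul_stepPoly_pow_succ (w : ℕ → ℕ → M) (i j r : ℕ) :
    prodPowCoeff w (single (i, j) 1 * stepPoly ^ (r + 1)) =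
      prodPowCoeff w (single (i + 1, j) 1 * stepPoly ^ r) *
      prodPowCoeff w (single (i, j + 1) 1 * stepPoly ^ r) *
      prodPowCoeff w (single (i + 1, j + 1) 1 * stepPoly ^ r) := by
  rw [pow_succ', ← mul_assoc, single_mul_stepPoly, add_mul, add_mul, prodPowCoeff_add,
    prodPowCoeff_add]

theorem iterate_eq_prodPowCoeff (ψ : M →* M) (w : ℕ → ℕ → M)
    (hw : ∀ i j, ψ (w i j) = w (i + 1) j * w i (j + 1) * w (i + 1) (j + 1)) (r i j : ℕ) :
    ψ^[r] (w i j) = prodPowCoeff w (single (i, j) 1 * stepPoly ^ r) := by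
  induction r generalizing i j with
  | zero => rw [pow_zero, mul_one, prodPowCoeff_single, pow_one]; rfl
  | succ r ih =>
    rw [Function.iterate_succ_apply, hw, iterate_map_mul, iterate_map_mul, ih, ih, ih,
      prodPowCoeff_single_mul_stepPoly_pow_succ]

end Expansion

theorem prod_range_eq_prod_map_range {M : Type*} [CommMonoid M] (f : ℕ → M) (n : ℕ) :
    ∏ k ∈ range n, f k = ((List.range n).map f).prod := by
  rw [prod_eq_multiset_prod, range_val, Multiset.range, Multiset.map_coe, Multiset.prod_coe]

theorem iteratedCmt_coe_eq_prod {G : Type*} [Group G] {H : Subgroup G} [IsMulCommutative H]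
    {x : G} (hx : ∀ h ∈ H, cmt h x ∈ H) (w : ℕ → ℕ → H)
    (hw : ∀ i j, cmt (w i j : G) x = w (i + 1) j * w i (j + 1) * w (i + 1) (j + 1)) (i j r : ℕ) :
    iteratedCmt (w i j : G) x r = ↑(∏ s ∈ range (r + 1), ∏ t ∈ range (s + 1),
      w (i + r - t) (j + r - s + t) ^ (r.choose s * s.choose t)) := by
  rw [← prodPowCoeff_single_mul_stepPoly_pow,
    ← iterate_eq_prodPowCoeff (H.cmtHom x hx) w fun i j => Subtype.ext (hw i j),
    iteratedCmt_eq_iterate]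
  exact (Function.Semiconj.iterate_right (f := Subtype.val) (ga := H.cmtHom x hx)
    (gb := fun h => cmt h x) (fun _ => rfl) r (w i j)).symm

/-- Lemma 4.4:  if the elements `z i j` (for `i, j ≥ 1`) pairwise commute and satisfy
`[z i j, x] = z (i+1) j · z i (j+1) · z (i+1) (j+1)`, then
`[z i j, x, …, x]` (`r` copies of `x`) equals
`∏_{s=0}^{r} ∏_{t=0}^{s} z (i+r−t) (j+r−s+t) ^ (C(r,s)·C(s,t))`. -/
theorem iterated_commutator_formula {G : Type*} [Group G] (x : G) (z : ℕ → ℕ → G)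
    (hcomm : ∀ i j k l, 1 ≤ i → 1 ≤ j → 1 ≤ k → 1 ≤ l → Commute (z i j) (z k l))
    (hrel : ∀ i j, 1 ≤ i → 1 ≤ j →
      cmt (z i j) x = z (i + 1) j * z i (j + 1) * z (i + 1) (j + 1)) :
    ∀ i j r, 1 ≤ i → 1 ≤ j →
      iteratedCmt (z i j) x r =
        ((List.range (r + 1)).map fun s =>
          ((List.range (s + 1)).map fun t =>
            z (i + r - t) (j + r - s + t) ^ (r.choose s * s.choose t)).prod).prod := by
  intro i j r hi hj
  obtain ⟨a, rfl⟩ := Nat.exists_eq_add_of_le' hi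
  obtain ⟨b, rfl⟩ := Nat.exists_eq_add_of_le' hj
  set H := Subgroup.closure {g | ∃ k l, 1 ≤ k ∧ 1 ≤ l ∧ z k l = g}
  have : IsMulCommutative H := Subgroup.isMulCommutative_closure <| by
    rintro _ ⟨k, l, hk, hl, rfl⟩ _ ⟨m, n, hm, hn, rfl⟩
    exact hcomm k l m n hk hl hm hn
  have hz : ∀ k l, 1 ≤ k → 1 ≤ l → z k l ∈ H := fun k l hk hl =>
    Subgroup.subset_closure ⟨k, l, hk, hl, rfl⟩
  have hx : ∀ h ∈ H, cmt h x ∈ H := fun h => cmt_mem_closure <| by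
    rintro _ ⟨k, l, hk, hl, rfl⟩
    rw [hrel k l hk hl]
    exact mul_mem (mul_mem (hz _ _ (by omega) hl) (hz _ _ hk (by omega)))
      (hz _ _ (by omega) (by omega))
  let w k l : H := ⟨z (k + 1) (l + 1), hz _ _ le_add_self le_add_self⟩
  rw [iteratedCmt_coe_eq_prod hx w (fun k l => hrel _ _ le_add_self le_add_self)]
  simp only [prod_range_eq_prod_map_range, SubmonoidClass.coe_list_prod, List.map_map,
    Function.comp_def, SubmonoidClass.coe_pow]
  refine congrArg List.prod (List.map_congr_left fun s hs => ?_)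
  refine congrArg List.prod (List.map_congr_left fun t ht => ?_)
  rw [List.mem_range] at hs ht
  show z (a + r - t + 1) (b + r - s + t + 1) ^ _ = z (a + 1 + r - t) (b + 1 + r - s + t) ^ _
  congr 2 <;> omega
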